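/- Let 1 < p < 5. Suppose there exists ω₀ > 0 such that m_{ω₀} < 2π·m_{ω₀,ℝ}. Then for every ω > ω₀ one also has m_ω < 2π·m_{ω,ℝ}. -/

import Mathlib

open MeasureTheory Real Complex
open scoped ComplexConjugate

noncomputable section

instance : Fact (0 < 2 * Real.pi) := ⟨by positivity⟩

/-- The circle `𝕋 = ℝ/2πℤ` of circumference `2π`. -/
abbrev Torus : Type := AddCircle (2 * Real.pi)

/-- The cylinder `ℝ × 𝕋`. -/
abbrev Cyl : Type := ℝ × Torus

/-- The line soliton `R_ω(x) = ((p+1)ω/2)^{1/(p-1)} · sech^{2/(p-1)}((p-1)√ω·x/2)`. -/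
def Rsol (p ω : ℝ) (x : ℝ) : ℝ :=
  ((p + 1) * ω / 2) ^ (1 / (p - 1)) *
    Real.cosh ((p - 1) * Real.sqrt ω / 2 * x) ^ (-(2 / (p - 1)))

/-- The critical frequency `ω_p = 4/((p-1)(p+3))`. -/
def omegaCrit (p : ℝ) : ℝ := 4 / ((p - 1) * (p + 3))

/-- The line soliton viewed as a `y`-independent complex function on the cylinder. -/
def Rcyl (p ω : ℝ) : Cyl → ℂ := fun z => (Rsol p ω z.1 : ℂ)

/-- `n`-th Fourier coefficient in the periodic variable: `u_n(x)`. -/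
def fCoef (u : Cyl → ℂ) (n : ℤ) (x : ℝ) : ℂ := fourierCoeff (fun y => u (x, y)) n

/-- Partial derivative in the `x` variable. -/
def dX (u : Cyl → ℂ) (z : Cyl) : ℂ := deriv (fun t => u (t, z.2)) z.1

/-- The quadratic form `∫ |D_y|u·ū dxdy = ‖|D_y|^{1/2}u‖²_{L²(ℝ×𝕋)}`, computed via the
Fourier expansion in `y` by Parseval: `2π Σ_n |n| ∫ |u_n(x)|² dx`. -/
def DyForm (u : Cyl → ℂ) : ℝ :=
  (2 * Real.pi) * ∑' n : ℤ, (|n| : ℝ) * ∫ x : ℝ, ‖fCoef u n x‖ ^ 2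

/-- The real bilinear pairing `Re ∫ |D_y|u · v̄ dxdy`. -/
def DyPair (u v : Cyl → ℂ) : ℝ :=
  (2 * Real.pi) * ∑' n : ℤ, (|n| : ℝ) * (∫ x : ℝ, fCoef u n x * conj (fCoef v n x)).re

/-- Membership in the energy space `X = H¹_xL²_y ∩ L²_xH^{1/2}_y(ℝ×𝕋)`. -/
structure MemX (u : Cyl → ℂ) : Prop where
  memL2 : MemLp u 2 volume
  diffX : ∀ y : Torus, Differentiable ℝ fun t => u (t, y)
  dX_memL2 : MemLp (dX u) 2 volume
  dy_summable : Summable fun n : ℤ => (|n| : ℝ) * ∫ x : ℝ, ‖fCoef u n x‖ ^ 2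

/-- The squared `X`-norm `‖u‖_X² = ∫(|∂_x u|² + |D_y|u·ū + |u|²)`. -/
def Xnorm2 (u : Cyl → ℂ) : ℝ :=
  (∫ z : Cyl, ‖dX u z‖ ^ 2) + DyForm u + ∫ z : Cyl, ‖u z‖ ^ 2

/-- The action functional `S_ω`. -/
def Sfun (p ω : ℝ) (u : Cyl → ℂ) : ℝ :=
  (1 / 2) * (∫ z : Cyl, ‖dX u z‖ ^ 2) + (1 / 2) * DyForm u
    + (ω / 2) * (∫ z : Cyl, ‖u z‖ ^ 2) - (1 / (p + 1)) * ∫ z : Cyl, ‖u z‖ ^ (p + 1)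

/-- The Nehari functional `N_ω`. -/
def Nfun (p ω : ℝ) (u : Cyl → ℂ) : ℝ :=
  (∫ z : Cyl, ‖dX u z‖ ^ 2) + DyForm u + ω * (∫ z : Cyl, ‖u z‖ ^ 2)
    - ∫ z : Cyl, ‖u z‖ ^ (p + 1)

/-- The minimal action `m_ω = inf{S_ω(u) : u ∈ X\{0}, N_ω(u) = 0}`. -/
def mval (p ω : ℝ) : ℝ :=
  sInf (Sfun p ω '' {u : Cyl → ℂ | MemX u ∧ ¬ u =ᵐ[volume] (0 : Cyl → ℂ) ∧ Nfun p ω u = 0})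

/-- A ground state: a minimizer of the action on the Nehari manifold. -/
def IsGroundState (p ω : ℝ) (Q : Cyl → ℂ) : Prop :=
  MemX Q ∧ ¬ Q =ᵐ[volume] (0 : Cyl → ℂ) ∧ Nfun p ω Q = 0 ∧ Sfun p ω Q = mval p ω

/-- Weak (variational) solution of `-∂_xx Q + |D_y|Q + ωQ - |Q|^{p-1}Q = 0` on `ℝ×𝕋`. -/
def IsWeakSolution (p ω : ℝ) (Q : Cyl → ℂ) : Prop :=
  MemX Q ∧ ∀ v : Cyl → ℂ, MemX v →
    (∫ z : Cyl, dX Q z * conj (dX v z)).re + DyPair Q v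
      + ω * (∫ z : Cyl, Q z * conj (v z)).re
      - (∫ z : Cyl, ((‖Q z‖ ^ (p - 1) : ℝ) : ℂ) * Q z * conj (v z)).re = 0

/-- The one-dimensional action `S_{ω,ℝ}`. -/
def SfunR (p ω : ℝ) (u : ℝ → ℝ) : ℝ :=
  (1 / 2) * (∫ x : ℝ, (deriv u x ^ 2 + ω * u x ^ 2))
    - (1 / (p + 1)) * ∫ x : ℝ, |u x| ^ (p + 1)

/-- The one-dimensional minimal action `m_{ω,ℝ} = S_{ω,ℝ}(R_ω)`. -/
def mR (p ω : ℝ) : ℝ := SfunR p ω (Rsol p ω)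

/-!
If `u` lies on the Nehari manifold at frequency `ω`, then for `c ≥ 1` the function
`v(x, y) = μ u(√c x, y)`, with the amplitude `μ` fixed by the Nehari constraint at `c ω`, is an
admissible competitor. The `|D_y|` term is invariant under this dilation while the `∂ₓ` and
mass terms grow by at most the factor `c`, so `μ ^ (p - 1) ≤ c` and
`S_{cω}(v) ≤ c ^ γ S_ω(u)` with `γ = (p + 1)/(p - 1) - 1/2`. This gives `m_{cω} ≤ c ^ γ m_ω`,
while the line soliton scales exactly: `m_{cω,ℝ} = c ^ γ m_{ω,ℝ}`. So a strict inequality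
`m_ω₀ < 2π m_{ω₀,ℝ}` propagates to every larger frequency.
-/

def scalingExponent (p : ℝ) : ℝ := (p + 1) / (p - 1) - 1 / 2

lemma Rsol_mul {p c ω : ℝ} (hp : 1 < p) (hc : 0 ≤ c) (hω : 0 ≤ ω) (x : ℝ) :
    Rsol p (c * ω) x = c ^ (1 / (p - 1)) * Rsol p ω (Real.sqrt c * x) := by
  unfold Rsol
  rw [show (p + 1) * (c * ω) / 2 = c * ((p + 1) * ω / 2) by ring,
    Real.mul_rpow hc (by positivity), Real.sqrt_mul hc]
  ring_nf

lemma SfunR_comp_mul {p a b : ℝ} (ha : 0 < a) (hb : 0 < b) (hab : a ^ (p - 1) = b ^ 2)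
    (ω : ℝ) (g : ℝ → ℝ) :
    SfunR p (b ^ 2 * ω) (fun x => a * g (b * x)) = a ^ 2 * b * SfunR p ω g := by
  have hderiv : deriv (fun x => a * g (b * x)) = fun x => a * (b * deriv g (b * x)) := by
    rw [deriv_const_mul_field']
    exact funext fun x => by rw [deriv_comp_mul_left, smul_eq_mul]
  have hpow : a ^ (p + 1) = a ^ 2 * b ^ 2 := by
    rw [show p + 1 = 2 + (p - 1) by ring, Real.rpow_add ha, hab, Real.rpow_two]
  have hquad : (∫ x, deriv (fun x => a * g (b * x)) x ^ 2 + b ^ 2 * ω * (a * g (b * x)) ^ 2)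
      = a ^ 2 * b * ∫ x, deriv g x ^ 2 + ω * g x ^ 2 := by
    simp only [hderiv]
    calc (∫ x, (a * (b * deriv g (b * x))) ^ 2 + b ^ 2 * ω * (a * g (b * x)) ^ 2)
        = ∫ x, (a * b) ^ 2 * (deriv g (b * x) ^ 2 + ω * g (b * x) ^ 2) := by
          congr 1; ext x; ring
      _ = a ^ 2 * b * ∫ x, deriv g x ^ 2 + ω * g x ^ 2 := by
          rw [integral_const_mul, Measure.integral_comp_mul_left
            (fun y => deriv g y ^ 2 + ω * g y ^ 2), abs_of_pos (inv_pos.2 hb), smul_eq_mul]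
          field_simp
  have hnonlin : (∫ x, |a * g (b * x)| ^ (p + 1)) = a ^ 2 * b * ∫ x, |g x| ^ (p + 1) := by
    calc (∫ x, |a * g (b * x)| ^ (p + 1)) = ∫ x, a ^ (p + 1) * |g (b * x)| ^ (p + 1) := by
          congr 1; ext x; rw [abs_mul, abs_of_pos ha, Real.mul_rpow ha.le (abs_nonneg _)]
      _ = a ^ 2 * b * ∫ x, |g x| ^ (p + 1) := by
          rw [integral_const_mul, Measure.integral_comp_mul_left (fun y => |g y| ^ (p + 1)),
            abs_of_pos (inv_pos.2 hb), smul_eq_mul, hpow]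
          field_simp
  unfold SfunR
  rw [hquad, hnonlin]
  ring

lemma mR_mul {p c ω : ℝ} (hp : 1 < p) (hc : 0 < c) (hω : 0 ≤ ω) :
    mR p (c * ω) = c ^ scalingExponent p * mR p ω := by
  have hp1 : p - 1 ≠ 0 := by linarith
  have hcoef : (c ^ (1 / (p - 1))) ^ 2 * Real.sqrt c = c ^ scalingExponent p := by
    rw [← Real.rpow_natCast, ← Real.rpow_mul hc.le, Real.sqrt_eq_rpow, ← Real.rpow_add hc,
      scalingExponent]
    congr 1
    field_simp
    ring
  set a := c ^ (1 / (p - 1))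
  set b := Real.sqrt c
  have ha : 0 < a := Real.rpow_pos_of_pos hc _
  have hb : 0 < b := Real.sqrt_pos.2 hc
  have hb2 : b ^ 2 = c := Real.sq_sqrt hc.le
  have hab : a ^ (p - 1) = b ^ 2 := by
    rw [hb2, ← Real.rpow_mul hc.le, one_div_mul_cancel hp1, Real.rpow_one]
  have hRsol : Rsol p (c * ω) = fun x => a * Rsol p ω (b * x) :=
    funext (Rsol_mul hp hc.le hω)
  unfold mR
  rw [hRsol, ← hcoef, ← hb2, SfunR_comp_mul ha hb hab]

section Dilation

variable {β : Type*} [MeasureSpace β] [SFinite (volume : Measure β)]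

def dilateFst {ν : ℝ} (hν : ν ≠ 0) : ℝ × β ≃ᵐ ℝ × β :=
  (Homeomorph.mulLeft₀ ν hν).toMeasurableEquiv.prodCongr (MeasurableEquiv.refl β)

lemma map_dilateFst_volume {ν : ℝ} (hν : ν ≠ 0) :
    Measure.map (dilateFst (β := β) hν) volume = ENNReal.ofReal |ν⁻¹| • volume := by
  have hmap : ⇑(dilateFst (β := β) hν) = Prod.map (ν * ·) id := rfl
  rw [Measure.volume_eq_prod, hmap, ← Measure.map_prod_map _ _ (measurable_const_mul ν)
    measurable_id, Real.map_volume_mul_left hν, Measure.map_id, Measure.prod_smul_left]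

lemma integral_comp_mul_fst {E : Type*} [NormedAddCommGroup E] [NormedSpace ℝ E]
    {ν : ℝ} (hν : ν ≠ 0) (g : ℝ × β → E) :
    (∫ z : ℝ × β, g (ν * z.1, z.2)) = |ν⁻¹| • ∫ z, g z := by
  have h := (dilateFst (β := β) hν).measurableEmbedding.integral_map (μ := volume) g
  rw [map_dilateFst_volume hν, integral_smul_measure,
    ENNReal.toReal_ofReal (abs_nonneg _)] at h
  exact h.symm

lemma MeasureTheory.MemLp.comp_mul_fst {E : Type*} [NormedAddCommGroup E] {ν : ℝ} (hν : ν ≠ 0)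
    {q : ENNReal} {g : ℝ × β → E} (hg : MemLp g q volume) :
    MemLp (fun z : ℝ × β => g (ν * z.1, z.2)) q volume := by
  have h := hg.smul_measure (c := ENNReal.ofReal |ν⁻¹|) ENNReal.ofReal_ne_top
  rw [← map_dilateFst_volume hν] at h
  exact (dilateFst hν).measurableEmbedding.memLp_map_measure_iff.1 h

end Dilation

def cylRescale (μ ν : ℝ) (u : Cyl → ℂ) : Cyl → ℂ := fun z => (μ : ℂ) * u (ν * z.1, z.2)

section cylRescale

variable {μ ν : ℝ} {u : Cyl → ℂ}

lemma dX_cylRescale (z : Cyl) :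
    dX (cylRescale μ ν u) z = ((μ * ν : ℝ) : ℂ) * dX u (ν * z.1, z.2) := by
  simp only [dX, cylRescale]
  rw [deriv_const_mul_field']
  beta_reduce
  rw [deriv_comp_mul_left ν (fun t => u (t, z.2)), Complex.real_smul]
  push_cast
  ring

lemma fCoef_cylRescale (n : ℤ) (x : ℝ) :
    fCoef (cylRescale μ ν u) n x = (μ : ℂ) * fCoef u n (ν * x) :=
  fourierCoeff.const_mul _ _ n

lemma integral_norm_cylRescale_sq (hν : 0 < ν) :
    (∫ z, ‖cylRescale μ ν u z‖ ^ 2) = μ ^ 2 * ν⁻¹ * ∫ z, ‖u z‖ ^ 2 := by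
  simp only [cylRescale, norm_mul, Complex.norm_real, Real.norm_eq_abs, mul_pow, sq_abs]
  rw [integral_const_mul, integral_comp_mul_fst hν.ne' (fun z => ‖u z‖ ^ 2),
    abs_of_pos (inv_pos.2 hν), smul_eq_mul, mul_assoc]

lemma integral_norm_cylRescale_rpow (hμ : 0 ≤ μ) (hν : 0 < ν) (q : ℝ) :
    (∫ z, ‖cylRescale μ ν u z‖ ^ q) = μ ^ q * ν⁻¹ * ∫ z, ‖u z‖ ^ q := by
  simp only [cylRescale, norm_mul, Complex.norm_real, Real.norm_eq_abs, abs_of_nonneg hμ,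
    Real.mul_rpow hμ (norm_nonneg _)]
  rw [integral_const_mul, integral_comp_mul_fst hν.ne' (fun z => ‖u z‖ ^ q),
    abs_of_pos (inv_pos.2 hν), smul_eq_mul, mul_assoc]

lemma integral_norm_dX_cylRescale_sq (hν : 0 < ν) :
    (∫ z, ‖dX (cylRescale μ ν u) z‖ ^ 2) = μ ^ 2 * ν * ∫ z, ‖dX u z‖ ^ 2 := by
  simp only [dX_cylRescale, norm_mul, Complex.norm_real, Real.norm_eq_abs, mul_pow, sq_abs]
  rw [integral_const_mul, integral_comp_mul_fst hν.ne' (fun z => ‖dX u z‖ ^ 2),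
    abs_of_pos (inv_pos.2 hν), smul_eq_mul]
  field_simp

lemma integral_norm_fCoef_cylRescale_sq (hν : 0 < ν) (n : ℤ) :
    (∫ x, ‖fCoef (cylRescale μ ν u) n x‖ ^ 2) = μ ^ 2 * ν⁻¹ * ∫ x, ‖fCoef u n x‖ ^ 2 := by
  simp only [fCoef_cylRescale, norm_mul, Complex.norm_real, Real.norm_eq_abs, mul_pow, sq_abs]
  rw [integral_const_mul, Measure.integral_comp_mul_left (fun x => ‖fCoef u n x‖ ^ 2),
    abs_of_pos (inv_pos.2 hν), smul_eq_mul, mul_assoc]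

lemma DyForm_cylRescale (hν : 0 < ν) :
    DyForm (cylRescale μ ν u) = μ ^ 2 * ν⁻¹ * DyForm u := by
  simp only [DyForm, integral_norm_fCoef_cylRescale_sq hν, mul_left_comm _ (μ ^ 2 * ν⁻¹),
    tsum_mul_left]

lemma MemX.cylRescale (hu : MemX u) (hν : 0 < ν) : MemX (cylRescale μ ν u) where
  memL2 := (hu.memL2.comp_mul_fst hν.ne').const_mul _
  diffX y := ((hu.diffX y).comp (differentiable_id.const_mul ν)).const_mul _
  dX_memL2 := by
    rw [funext dX_cylRescale]
    exact (hu.dX_memL2.comp_mul_fst hν.ne').const_mul _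
  dy_summable := by
    simp only [integral_norm_fCoef_cylRescale_sq hν, mul_left_comm _ (μ ^ 2 * ν⁻¹)]
    exact hu.dy_summable.mul_left _

end cylRescale

def nehariSet (p ω : ℝ) : Set (Cyl → ℂ) :=
  {u | MemX u ∧ ¬ u =ᵐ[volume] (0 : Cyl → ℂ) ∧ Nfun p ω u = 0}

lemma DyForm_nonneg (u : Cyl → ℂ) : 0 ≤ DyForm u :=
  mul_nonneg (by positivity)
    (tsum_nonneg fun n => mul_nonneg (by positivity) (integral_nonneg fun x => by positivity))

section Nehari

variable {p ω : ℝ} {u : Cyl → ℂ}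

lemma Sfun_eq_of_Nfun_eq_zero (h : Nfun p ω u = 0) :
    Sfun p ω u = (1 / 2 - 1 / (p + 1)) * ∫ z, ‖u z‖ ^ (p + 1) := by
  unfold Nfun at h
  unfold Sfun
  linear_combination (1 / 2 : ℝ) * h

lemma Sfun_nonneg_of_Nfun_eq_zero (hp : 1 ≤ p) (h : Nfun p ω u = 0) : 0 ≤ Sfun p ω u := by
  rw [Sfun_eq_of_Nfun_eq_zero h]
  have hκ : 1 / (p + 1) ≤ 1 / 2 := one_div_le_one_div_of_le two_pos (by linarith)
  exact mul_nonneg (sub_nonneg.2 hκ) (integral_nonneg fun z => by positivity)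

lemma bddBelow_Sfun_image_nehariSet (hp : 1 ≤ p) : BddBelow (Sfun p ω '' nehariSet p ω) :=
  ⟨0, by rintro _ ⟨u, hu, rfl⟩; exact Sfun_nonneg_of_Nfun_eq_zero hp hu.2.2⟩

lemma integral_norm_sq_pos (hu : MemLp u 2 volume) (hne : ¬ u =ᵐ[volume] 0) :
    0 < ∫ z, ‖u z‖ ^ 2 := by
  refine (integral_nonneg fun z => by positivity).lt_of_ne' fun h0 => hne ?_
  have hint : Integrable (fun z => ‖u z‖ ^ 2) volume := hu.integrable_norm_pow two_ne_zero
  filter_upwards [(integral_eq_zero_iff_of_nonneg (fun z => by positivity) hint).1 h0] with z hz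
  simpa using hz

lemma integral_norm_rpow_pos_of_mem_nehariSet (hω : 0 < ω) (hu : u ∈ nehariSet p ω) :
    0 < ∫ z, ‖u z‖ ^ (p + 1) := by
  obtain ⟨hX, hne, hN⟩ := hu
  have hM := integral_norm_sq_pos hX.memL2 hne
  have hQ : 0 ≤ ∫ z, ‖dX u z‖ ^ 2 := integral_nonneg fun z => by positivity
  unfold Nfun at hN
  nlinarith [DyForm_nonneg u]

lemma Nfun_cylRescale {μ ν : ℝ} (hμ : 0 ≤ μ) (hν : 0 < ν) :
    Nfun p ω (cylRescale μ ν u)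
      = μ ^ 2 * ν⁻¹ * (ν ^ 2 * (∫ z, ‖dX u z‖ ^ 2) + DyForm u + ω * ∫ z, ‖u z‖ ^ 2)
        - μ ^ (p + 1) * ν⁻¹ * ∫ z, ‖u z‖ ^ (p + 1) := by
  rw [Nfun, integral_norm_dX_cylRescale_sq hν, DyForm_cylRescale hν,
    integral_norm_cylRescale_sq hν, integral_norm_cylRescale_rpow hμ hν]
  field_simp

lemma exists_cylRescale_mem_nehariSet (hp : 1 < p) (hω : 0 < ω) (hu : MemX u)
    (hne : ¬ u =ᵐ[volume] 0) (hP : 0 < ∫ z, ‖u z‖ ^ (p + 1)) {ν : ℝ} (hν : 0 < ν) :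
    ∃ μ, 0 < μ ∧
      μ ^ (p - 1) * ∫ z, ‖u z‖ ^ (p + 1)
        = ν ^ 2 * (∫ z, ‖dX u z‖ ^ 2) + DyForm u + ω * ∫ z, ‖u z‖ ^ 2 ∧
      cylRescale μ ν u ∈ nehariSet p ω := by
  set K := ν ^ 2 * (∫ z, ‖dX u z‖ ^ 2) + DyForm u + ω * ∫ z, ‖u z‖ ^ 2
  set P := ∫ z, ‖u z‖ ^ (p + 1)
  have hM := integral_norm_sq_pos hu.memL2 hne
  have hK : 0 < K := by
    have hQ : 0 ≤ ∫ z, ‖dX u z‖ ^ 2 := integral_nonneg fun z => by positivity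
    have := DyForm_nonneg u
    positivity
  set μ := (K / P) ^ (1 / (p - 1))
  have hμ : 0 < μ := Real.rpow_pos_of_pos (div_pos hK hP) _
  have hbalance : μ ^ (p - 1) * P = K := by
    rw [← Real.rpow_mul (div_pos hK hP).le, one_div_mul_cancel (by linarith), Real.rpow_one,
      div_mul_cancel₀ _ hP.ne']
  refine ⟨μ, hμ, hbalance, hu.cylRescale hν, fun h0 => ?_, ?_⟩
  · have hv := integral_norm_cylRescale_sq (μ := μ) (u := u) hν
    rw [integral_eq_zero_of_ae (h0.mono fun z hz => by simp [hz])] at hv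
    have : 0 < μ ^ 2 * ν⁻¹ * ∫ z, ‖u z‖ ^ 2 := by positivity
    linarith
  · have hpow : μ ^ (p + 1) = μ ^ 2 * μ ^ (p - 1) := by
      rw [show p + 1 = 2 + (p - 1) by ring, Real.rpow_add hμ, Real.rpow_two]
    rw [Nfun_cylRescale hμ.le hν, hpow]
    change μ ^ 2 * ν⁻¹ * K - μ ^ 2 * μ ^ (p - 1) * ν⁻¹ * P = 0
    rw [← hbalance]
    ring

lemma nehariSet_nonempty_of_nonempty (hp : 1 < p) {ω' : ℝ} (hω : 0 < ω) (hω' : 0 < ω')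
    (h : (nehariSet p ω).Nonempty) : (nehariSet p ω').Nonempty := by
  obtain ⟨u, hu⟩ := h
  obtain ⟨μ, -, -, hv⟩ := exists_cylRescale_mem_nehariSet hp hω' hu.1 hu.2.1
    (integral_norm_rpow_pos_of_mem_nehariSet hω hu) one_pos
  exact ⟨_, hv⟩

lemma exists_mem_nehariSet_Sfun_le (hp : 1 < p) (hω : 0 < ω) {c : ℝ} (hc : 1 ≤ c)
    (hu : u ∈ nehariSet p ω) :
    ∃ v ∈ nehariSet p (c * ω), Sfun p (c * ω) v ≤ c ^ scalingExponent p * Sfun p ω u := by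
  have hc0 : 0 < c := by linarith
  have hP := integral_norm_rpow_pos_of_mem_nehariSet hω hu
  have hν : 0 < Real.sqrt c := Real.sqrt_pos.2 hc0
  obtain ⟨μ, hμ, hbalance, hv⟩ :=
    exists_cylRescale_mem_nehariSet hp (mul_pos hc0 hω) hu.1 hu.2.1 hP hν
  refine ⟨_, hv, ?_⟩
  set P := ∫ z, ‖u z‖ ^ (p + 1)
  have hμc : μ ^ (p - 1) ≤ c := by
    have hN := hu.2.2
    unfold Nfun at hN
    rw [Real.sq_sqrt hc0.le] at hbalance
    refine le_of_mul_le_mul_right ?_ hP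
    nlinarith [DyForm_nonneg u]
  have hμpow : μ ^ (p + 1) ≤ c ^ ((p + 1) / (p - 1)) := by
    rw [show μ ^ (p + 1) = (μ ^ (p - 1)) ^ ((p + 1) / (p - 1)) by
      rw [← Real.rpow_mul hμ.le]; congr 1; field_simp [show p - 1 ≠ 0 by linarith]]
    exact Real.rpow_le_rpow (by positivity) hμc (div_nonneg (by linarith) (by linarith))
  have hκ : 0 ≤ 1 / 2 - 1 / (p + 1) := by
    rw [sub_nonneg]; exact one_div_le_one_div_of_le two_pos (by linarith)
  rw [Sfun_eq_of_Nfun_eq_zero hv.2.2, Sfun_eq_of_Nfun_eq_zero hu.2.2,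
    integral_norm_cylRescale_rpow hμ.le hν, scalingExponent, Real.rpow_sub hc0,
    ← Real.sqrt_eq_rpow, ← div_eq_mul_inv]
  calc (1 / 2 - 1 / (p + 1)) * (μ ^ (p + 1) / Real.sqrt c * P)
      = (1 / 2 - 1 / (p + 1)) * (μ ^ (p + 1) * (P / Real.sqrt c)) := by ring
    _ ≤ (1 / 2 - 1 / (p + 1)) * (c ^ ((p + 1) / (p - 1)) * (P / Real.sqrt c)) := by gcongr
    _ = c ^ ((p + 1) / (p - 1)) / Real.sqrt c * ((1 / 2 - 1 / (p + 1)) * P) := by ring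

end Nehari

lemma mval_mul_le {p ω c : ℝ} (hp : 1 < p) (hω : 0 < ω) (hc : 1 ≤ c) :
    mval p (c * ω) ≤ c ^ scalingExponent p * mval p ω := by
  have hc0 : 0 < c := by linarith
  change sInf (Sfun p (c * ω) '' nehariSet p (c * ω))
    ≤ c ^ scalingExponent p * sInf (Sfun p ω '' nehariSet p ω)
  rcases (nehariSet p ω).eq_empty_or_nonempty with hempty | hne
  · have hempty' : nehariSet p (c * ω) = ∅ := Set.not_nonempty_iff_eq_empty.1 fun h =>
      Set.not_nonempty_iff_eq_empty.2 hempty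
        (nehariSet_nonempty_of_nonempty hp (mul_pos hc0 hω) hω h)
    simp [hempty, hempty'] -- `sInf ∅ = 0` on both sides
  · rw [← div_le_iff₀' (Real.rpow_pos_of_pos hc0 _)]
    refine le_csInf (hne.image _) ?_
    rintro _ ⟨u, hu, rfl⟩
    obtain ⟨v, hv, hS⟩ := exists_mem_nehariSet_Sfun_le hp hω hc hu
    rw [div_le_iff₀' (Real.rpow_pos_of_pos hc0 _)]
    exact (csInf_le (bddBelow_Sfun_image_nehariSet hp.le) ⟨v, hv, rfl⟩).trans hS

theorem subcritical_action_monotone_general (p : ℝ) (hp : 1 < p)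
    (ω₀ : ℝ) (hω₀ : 0 < ω₀) (h : mval p ω₀ < 2 * Real.pi * mR p ω₀) :
    ∀ ω : ℝ, ω₀ < ω → mval p ω < 2 * Real.pi * mR p ω := by
  intro ω hω
  set c := ω / ω₀
  have hc : 1 ≤ c := (one_le_div hω₀).2 hω.le
  have hω_eq : ω = c * ω₀ := (div_mul_cancel₀ ω hω₀.ne').symm
  have hγ : 0 < c ^ scalingExponent p := Real.rpow_pos_of_pos (by linarith) _
  rw [hω_eq, mR_mul hp (by linarith) hω₀.le]
  calc mval p (c * ω₀) ≤ c ^ scalingExponent p * mval p ω₀ := mval_mul_le hp hω₀ hc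
    _ < c ^ scalingExponent p * (2 * Real.pi * mR p ω₀) := mul_lt_mul_of_pos_left h hγ
    _ = 2 * Real.pi * (c ^ scalingExponent p * mR p ω₀) := by ring

/-- if `m_{ω₀} < 2π·m_{ω₀,ℝ}` for some `ω₀ > 0`, then
`m_ω < 2π·m_{ω,ℝ}` for every `ω > ω₀`. -/
theorem subcritical_action_monotone (p : ℝ) (hp : 1 < p) (hp5 : p < 5)
    (ω₀ : ℝ) (hω₀ : 0 < ω₀) (h : mval p ω₀ < 2 * Real.pi * mR p ω₀) :
    ∀ ω : ℝ, ω₀ < ω → mval p ω < 2 * Real.pi * mR p ω :=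
  subcritical_action_monotone_general p hp ω₀ hω₀ h
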